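/- Let Ψ ∈ ℂ^{N×n} have DFT-incoherence parameter γ, let A = (√N/√m) S Ψ ∈ ℂ^{m×n}, and let v ∈ ℂ^n have at most s nonzero entries. Then for every k ∈ {1,…,m} and every choice of sample points t̃_1,…,t̃_m ∈ ℝ, |(Av)_k| ≤ γ √s ‖v‖₂ / √m. -/

import Mathlib

open scoped BigOperators
open MeasureTheory Matrix

noncomputable section

/-- The complex exponential `e(x) = exp(2πix)`. -/
def ce (x : ℝ) : ℂ := Complex.exp (2 * Real.pi * Complex.I * x)

/-- Half-bandwidth `Ñ = (N-1)/2`. -/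
def Nt (N : ℕ) : ℤ := ((N : ℤ) - 1) / 2

/-- Uniform grid point `t_p = (p-1)/N - 1/2` (zero-based index). -/
def tg (N : ℕ) (p : Fin N) : ℝ := (p : ℝ) / N - 1 / 2

/-- Dirichlet interpolation matrix `S ∈ ℂ^{m×N}`. -/
def dirS (N m : ℕ) (tt : Fin m → ℝ) : Matrix (Fin m) (Fin N) ℂ :=
  fun k p => (N : ℂ)⁻¹ * ∑ u ∈ Finset.Icc (-(Nt N)) (Nt N), ce (u * (tg N p - tt k))

/-- Centered DFT matrix `F ∈ ℂ^{N×N}`. -/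
def dftF (N : ℕ) : Matrix (Fin N) (Fin N) ℂ :=
  fun p u => ((Real.sqrt N : ℂ))⁻¹ * ce (-(tg N p) * ((u : ℤ) - Nt N))

/-- DFT-incoherence parameter of `Ψ`. -/
def dftIncoh (N n : ℕ) (Ψ : Matrix (Fin N) (Fin n) ℂ) : ℝ :=
  ⨆ ℓ : Fin n, ∑ k : Fin N, ‖((dftF N)ᴴ * Ψ) k ℓ‖

/-- Euclidean norm on `ℂ^n`. -/
def norm2 {n : ℕ} (v : Fin n → ℂ) : ℝ := Real.sqrt (∑ i, ‖v i‖ ^ 2)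

/-- `ℓ₁` norm on `ℂ^n`. -/
def norm1 {n : ℕ} (v : Fin n → ℂ) : ℝ := ∑ i, ‖v i‖

/-- `v` has at most `s` nonzero entries. -/
def Sparse {n : ℕ} (s : ℕ) (v : Fin n → ℂ) : Prop :=
  (Finset.univ.filter fun i => v i ≠ 0).card ≤ s

/-- Error of the best `s`-sparse approximation of `g` in `ℓ₁`. -/
def sperr {n : ℕ} (s : ℕ) (g : Fin n → ℂ) : ℝ :=
  sInf {r : ℝ | ∃ h : Fin n → ℂ, Sparse s h ∧ r = norm1 (fun i => h i - g i)}

/-- The 1-periodic signal with Fourier coefficients `c`. -/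
def fcont (c : ℤ → ℂ) (x : ℝ) : ℂ := ∑' ℓ : ℤ, c ℓ * ce (ℓ * x)

/-- Tail `∑_{|ℓ|>Ñ} |c_ℓ|` of the Fourier coefficients. -/
def tailSum (N : ℕ) (c : ℤ → ℂ) : ℝ :=
  ∑' ℓ : ℤ, if Nt N < |ℓ| then ‖c ℓ‖ else 0

/-- The distribution `𝒟` satisfies the deviation model with parameter `θ`. -/
def DevModel (N m : ℕ) (𝒟 : Measure ℝ) (θ : ℝ) : Prop :=
  ∀ j : ℤ, j ≠ 0 → (|j| : ℝ) ≤ 2 * ((N : ℝ) - 1) / m →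
    (2 * N / m) * ‖∫ x, ce (((j * m : ℤ) : ℝ) * x) ∂𝒟‖ ≤ θ

/-- The random nonuniform sample points `t̃_k = (k-1)/m - 1/2 + Δ_k`. -/
def samplePts {Ω : Type*} (m : ℕ) (Δ : Fin m → Ω → ℝ) (ω : Ω) : Fin m → ℝ :=
  fun k => (k : ℝ) / m - 1 / 2 + Δ k ω

end

/-! The Dirichlet kernel factors through the DFT: `S = N^{-1/2} E F*` with the unimodular matrix
`E k u = e(-(u - Ñ) t̃_k)`, so every entry of `A = √(N/m) S Ψ` has modulus at most `γ / √m`.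
Hence `|(Av)_k| ≤ γ ‖v‖₁ / √m`, and Cauchy–Schwarz on the support of `v` gives
`‖v‖₁ ≤ √s ‖v‖₂`. -/

theorem norm_ce (x : ℝ) : ‖ce x‖ = 1 := by
  simp [ce, Complex.norm_exp]

theorem ce_add (x y : ℝ) : ce (x + y) = ce x * ce y := by
  rw [ce, ce, ce, ← Complex.exp_add]
  push_cast
  ring_nf

theorem conj_ce (x : ℝ) : starRingEnd ℂ (ce x) = ce (-x) := by
  rw [ce, ce, ← Complex.exp_conj]
  simp only [map_mul, Complex.conj_I, Complex.conj_ofReal, map_ofNat]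
  push_cast
  ring_nf

theorem two_mul_Nt_add_one {N : ℕ} (hN : Odd N) : 2 * Nt N + 1 = N := by
  obtain ⟨t, rfl⟩ := hN
  simp only [Nt]
  push_cast
  omega

theorem sum_Icc_neg_Nt_eq_sum_fin {M : Type*} [AddCommMonoid M] {N : ℕ} (hN : Odd N)
    (f : ℤ → M) :
    ∑ u ∈ Finset.Icc (-Nt N) (Nt N), f u = ∑ u : Fin N, f (u - Nt N) := by
  have hN' := two_mul_Nt_add_one hN
  refine (Finset.sum_bij (fun (u : Fin N) _ => (u : ℤ) - Nt N) ?_ ?_ ?_ fun _ _ => rfl).symm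
  · intro u _
    simp only [Finset.mem_Icc]
    omega
  · intro u _ u' _ h
    exact Fin.ext (by omega)
  · intro b hb
    rw [Finset.mem_Icc] at hb
    exact ⟨⟨(b + Nt N).toNat, by omega⟩, Finset.mem_univ _, by simp only; omega⟩

noncomputable def nonuniformDFT (N m : ℕ) (tt : Fin m → ℝ) : Matrix (Fin m) (Fin N) ℂ :=
  fun k u => ce (-(((u : ℤ) - Nt N) * tt k))

theorem dirS_eq_smul_nonuniformDFT_mul_conjTranspose {N : ℕ} (hN : Odd N) (m : ℕ)
    (tt : Fin m → ℝ) :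
    dirS N m tt = ((Real.sqrt N : ℂ))⁻¹ • (nonuniformDFT N m tt * (dftF N)ᴴ) := by
  have hsq : ((Real.sqrt N : ℂ))⁻¹ * ((Real.sqrt N : ℂ))⁻¹ = (N : ℂ)⁻¹ := by
    rw [← mul_inv, ← Complex.ofReal_mul, Real.mul_self_sqrt N.cast_nonneg,
      Complex.ofReal_natCast]
  ext k p
  rw [dirS, sum_Icc_neg_Nt_eq_sum_fin hN, Matrix.smul_apply, mul_apply, smul_eq_mul, Finset.mul_sum,
    Finset.mul_sum]
  refine Finset.sum_congr rfl fun u _ => ?_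
  rw [nonuniformDFT, conjTranspose_apply, dftF, star_mul', star_inv₀, Complex.star_def,
    Complex.conj_ofReal, conj_ce, ← hsq, mul_left_comm (ce _), ← ce_add, mul_assoc]
  congr 3
  push_cast
  ring

theorem norm_nonuniformDFT_apply (N m : ℕ) (tt : Fin m → ℝ) (k : Fin m) (u : Fin N) :
    ‖nonuniformDFT N m tt k u‖ = 1 :=
  norm_ce _

theorem sum_norm_le_dftIncoh (N n : ℕ) (Ψ : Matrix (Fin N) (Fin n) ℂ) (ℓ : Fin n) :
    ∑ u, ‖((dftF N)ᴴ * Ψ) u ℓ‖ ≤ dftIncoh N n Ψ :=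
  le_ciSup (f := fun j => ∑ u, ‖((dftF N)ᴴ * Ψ) u j‖) (Set.finite_range _).bddAbove ℓ

theorem dftIncoh_nonneg (N n : ℕ) (Ψ : Matrix (Fin N) (Fin n) ℂ) : 0 ≤ dftIncoh N n Ψ :=
  Real.iSup_nonneg fun _ => by positivity

theorem Matrix.norm_mul_apply_le_of_norm_le_one {l m n R : Type*} [Fintype m] [SeminormedRing R]
    {E : Matrix l m R} (hE : ∀ i j, ‖E i j‖ ≤ 1) (M : Matrix m n R) (i : l) (k : n) :
    ‖(E * M) i k‖ ≤ ∑ j, ‖M j k‖ :=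
  norm_sum_le_of_le _ fun j _ =>
    (norm_mul_le _ _).trans (mul_le_of_le_one_left (norm_nonneg _) (hE i j))

theorem Matrix.norm_mulVec_apply_le {l m R : Type*} [Fintype m] [SeminormedRing R]
    {M : Matrix l m R} {c : ℝ} (hM : ∀ i j, ‖M i j‖ ≤ c) (v : m → R) (i : l) :
    ‖(M *ᵥ v) i‖ ≤ c * ∑ j, ‖v j‖ := by
  rw [Finset.mul_sum]
  exact norm_sum_le_of_le _ fun j _ =>
    (norm_mul_le _ _).trans (mul_le_mul_of_nonneg_right (hM i j) (norm_nonneg _))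

theorem norm_dirS_mul_apply_le {N : ℕ} (hN : Odd N) {m n : ℕ} (tt : Fin m → ℝ)
    (Ψ : Matrix (Fin N) (Fin n) ℂ) (k : Fin m) (ℓ : Fin n) :
    ‖(dirS N m tt * Ψ) k ℓ‖ ≤ dftIncoh N n Ψ / Real.sqrt N := by
  rw [dirS_eq_smul_nonuniformDFT_mul_conjTranspose hN, Matrix.smul_mul, Matrix.mul_assoc,
    Matrix.smul_apply, smul_eq_mul, norm_mul, norm_inv,
    Complex.norm_of_nonneg (Real.sqrt_nonneg _), inv_mul_eq_div]
  gcongr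
  have hE k u := (norm_nonuniformDFT_apply N m tt k u).le
  exact (norm_mul_apply_le_of_norm_le_one hE _ k ℓ).trans (sum_norm_le_dftIncoh N n Ψ ℓ)

open Finset in
theorem norm1_le_sqrt_mul_norm2 {n s : ℕ} {v : Fin n → ℂ} (hv : Sparse s v) :
    norm1 v ≤ Real.sqrt s * norm2 v := by
  have hsupp : norm1 v = ∑ i with v i ≠ 0, ‖v i‖ :=
    (sum_filter_of_ne fun _ _ h => norm_ne_zero_iff.mp h).symm
  rw [norm2, ← Real.sqrt_mul s.cast_nonneg, hsupp, Real.le_sqrt (by positivity) (by positivity)]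
  calc (∑ i with v i ≠ 0, ‖v i‖) ^ 2
      ≤ #{i | v i ≠ 0} * ∑ i with v i ≠ 0, ‖v i‖ ^ 2 := sq_sum_le_card_mul_sum_sq
    _ ≤ s * ∑ i, ‖v i‖ ^ 2 := by
      gcongr
      · exact_mod_cast hv
      · exact filter_subset _ _

theorem sparse_row_inner_bound_general
    (N n m s : ℕ) (hN : Odd N)
    (Ψ : Matrix (Fin N) (Fin n) ℂ)
    (tt : Fin m → ℝ)
    (A : Matrix (Fin m) (Fin n) ℂ)
    (hA : A = ((Real.sqrt N : ℂ) / (Real.sqrt m : ℂ)) • (dirS N m tt * Ψ))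
    (v : Fin n → ℂ) (hv : Sparse s v) :
    ∀ k : Fin m,
      ‖A.mulVec v k‖ ≤
        dftIncoh N n Ψ * Real.sqrt s * norm2 v / Real.sqrt m := by
  have hsqrtN : Real.sqrt N ≠ 0 := (Real.sqrt_pos.2 (mod_cast hN.pos)).ne'
  have hentry : ∀ k ℓ, ‖A k ℓ‖ ≤ dftIncoh N n Ψ / Real.sqrt m := by
    intro k ℓ
    rw [hA, Matrix.smul_apply, smul_eq_mul, norm_mul, norm_div,
      Complex.norm_of_nonneg (Real.sqrt_nonneg _), Complex.norm_of_nonneg (Real.sqrt_nonneg _)]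
    calc Real.sqrt N / Real.sqrt m * ‖(dirS N m tt * Ψ) k ℓ‖
        ≤ Real.sqrt N / Real.sqrt m * (dftIncoh N n Ψ / Real.sqrt N) := by
          gcongr
          exact norm_dirS_mul_apply_le hN tt Ψ k ℓ
      _ = dftIncoh N n Ψ / Real.sqrt m := by field_simp
  intro k
  calc ‖(A *ᵥ v) k‖ ≤ dftIncoh N n Ψ / Real.sqrt m * norm1 v :=
        norm_mulVec_apply_le hentry v k
    _ ≤ dftIncoh N n Ψ / Real.sqrt m * (Real.sqrt s * norm2 v) := by
      have := dftIncoh_nonneg N n Ψ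
      gcongr
      exact norm1_le_sqrt_mul_norm2 hv
    _ = dftIncoh N n Ψ * Real.sqrt s * norm2 v / Real.sqrt m := by ring

/-- for `A = (√N/√m) S Ψ` and any `s`-sparse `v ∈ ℂ^n`,
`|(Av)_k| ≤ γ √s ‖v‖₂ / √m` for every `k` and every choice of sample points. -/
theorem sparse_row_inner_bound
    (N n m s : ℕ) (hN : Odd N) (hNpos : 0 < N) (hm : 0 < m) (hn : 0 < n)
    (Ψ : Matrix (Fin N) (Fin n) ℂ)
    (tt : Fin m → ℝ)
    (A : Matrix (Fin m) (Fin n) ℂ)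
    (hA : A = ((Real.sqrt N : ℂ) / (Real.sqrt m : ℂ)) • (dirS N m tt * Ψ))
    (v : Fin n → ℂ) (hv : Sparse s v) :
    ∀ k : Fin m,
      ‖A.mulVec v k‖ ≤
        dftIncoh N n Ψ * Real.sqrt s * norm2 v / Real.sqrt m :=
  sparse_row_inner_bound_general N n m s hN Ψ tt A hA v hv
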